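/- arXiv:1403.4669 — 2 statements merged into one kernel-verified Lean document; each statement's English description precedes it below -/
import Mathlib

section
/- Let a point be uniformly distributed in the region A' obtained by removing a closed disk of radius ε centered at the origin from a regular L-sided polygon inscribed in a circle of radius W centered at the origin (with ε < W_p, where W_p = W cos(π/L) is the apothem). Then the density of the distance R from the point to the origin is f_R(r) = 2πr/|A'| for ε ≤ r ≤ W_p, and f_R(r) = (2πr − 2Lr·arccos(W_p/r))/|A'| for W_p ≤ r ≤ W, where |A'| = (1/2)L W² sin(2π/L) − πε². -/
/-! In polar coordinates `x = (r cos φ, r sin φ)`, `r > 0`, membership in the polygon reads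
`cos (φ - 2πk/L) ≤ W_p / r` for all `k`. This set of angles is `2π/L`-periodic, and on the
period `(-π/L, π/L]` only `k = 0` matters, so there it is the period minus the arc
`|φ| < arccos (W_p / r)`. Hence the circle of radius `r` meets the polygon in total length
`r (2π - 2L arccos (W_p / r))`, which is the density of `‖x‖` under Lebesgue measure on `A'` for
`ε < r ≤ W`. Since `r² arccos (W_p / r) - W_p √(r² - W_p²)` is an antiderivative of
`2 r arccos (W_p / r)`, this density integrates to `|A'|`. -/

open MeasureTheory Real

/-- A regular L-sided polygon inscribed in a circle of radius W centered at the origin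
(intersection of L half-planes with apothem W cos(π/L)), with the closed disk of radius ε
around the origin removed. -/
def regPolyMinusDisk (L : ℕ) (W ε : ℝ) : Set (EuclideanSpace ℝ (Fin 2)) :=
  {x | (∀ k : Fin L,
          x 0 * Real.cos (2 * π * k / L) + x 1 * Real.sin (2 * π * k / L)
            ≤ W * Real.cos (π / L))
        ∧ ε < ‖x‖}

open Set Function
open scoped ENNReal

lemma cos_sub_two_pi_mul_div_of_modEq {L : ℕ} {a b : ℤ} (h : a ≡ b [ZMOD L]) (φ : ℝ) :
    cos (φ - 2 * π * a / L) = cos (φ - 2 * π * b / L) := by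
  rcases eq_or_ne L 0 with rfl | hL
  · simp
  obtain ⟨m, hm⟩ := h.dvd
  rw [show (b : ℝ) = a + L * m by exact_mod_cast (eq_add_of_sub_eq' hm),
    show φ - 2 * π * (a + L * m) / L = φ - 2 * π * a / L - m * (2 * π) by field_simp; ring,
    cos_sub_int_mul_two_pi]

lemma cos_le_cos_of_le_of_le_two_pi_sub {a x : ℝ} (ha : 0 ≤ a) (hax : a ≤ x)
    (hxa : x ≤ 2 * π - a) : cos x ≤ cos a := by
  rcases le_total x π with hxπ | hπx
  · exact cos_le_cos_of_nonneg_of_le_pi ha hxπ hax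
  · rw [← cos_two_pi_sub]
    exact cos_le_cos_of_nonneg_of_le_pi ha (by linarith) (by linarith)

lemma cos_le_iff_arccos_le_abs {φ t : ℝ} (hφ : |φ| ≤ π) (ht : -1 ≤ t) :
    cos φ ≤ t ↔ arccos t ≤ |φ| := by
  rw [← cos_abs]
  constructor
  · intro h
    simpa only [arccos_cos (abs_nonneg φ) hφ] using arccos_le_arccos h
  · intro h
    rcases le_total t 1 with ht1 | ht1
    · simpa [cos_arccos ht ht1] using
        cos_le_cos_of_nonneg_of_le_pi (arccos_nonneg t) hφ h
    · exact (cos_le_one _).trans ht1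

lemma arccos_lt_of_cos_lt {x y : ℝ} (hy : 0 < y) (hyπ : y ≤ π) (h : cos y < x) :
    arccos x < y := by
  rcases le_or_gt x 1 with hx | hx
  · simpa only [arccos_cos hy.le hyπ] using arccos_lt_arccos (neg_one_le_cos y) h hx
  · rwa [arccos_eq_zero.mpr hx.le]

lemma cos_pi_div_pos {L : ℕ} (hL : 3 ≤ L) : 0 < cos (π / L) := by
  have hL' : (3 : ℝ) ≤ L := by exact_mod_cast hL
  apply cos_pos_of_mem_Ioo
  constructor
  · linarith [pi_pos, div_pos pi_pos (by linarith : (0 : ℝ) < L)]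
  · rw [div_lt_iff₀ (by linarith)]
    nlinarith [pi_pos]

lemma pi_div_natCast_le_pi {L : ℕ} (hL : 0 < L) : π / L ≤ π :=
  div_le_self pi_pos.le (by exact_mod_cast hL)

lemma hasDerivAt_sq_mul_arccos_div_sub {c x : ℝ} (hc : 0 < c) (hcx : c < x) :
    HasDerivAt (fun r => r ^ 2 * arccos (c / r) - c * √(r ^ 2 - c ^ 2))
      (2 * x * arccos (c / x)) x := by
  have hx : 0 < x := hc.trans hcx
  have hs : 0 < x ^ 2 - c ^ 2 := by nlinarith
  have hdiv : HasDerivAt (fun r => c / r) (-c / x ^ 2) x := by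
    simpa [div_eq_mul_inv, neg_div] using (hasDerivAt_inv hx.ne').const_mul c
  have harccos := (hasDerivAt_arccos (by linarith [div_pos hc hx])
    ((div_lt_one hx).mpr hcx).ne).comp x hdiv
  have hsqrt := (((hasDerivAt_pow 2 x).sub_const (c ^ 2)).sqrt hs.ne').const_mul c
  refine (((hasDerivAt_pow 2 x).mul harccos).sub hsqrt).congr_deriv ?_
  have h1 : √(1 - (c / x) ^ 2) = √(x ^ 2 - c ^ 2) / x := by
    rw [show 1 - (c / x) ^ 2 = (x ^ 2 - c ^ 2) / x ^ 2 by field_simp, sqrt_div hs.le,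
      sqrt_sq hx.le]
  rw [h1, Function.comp_apply]
  field_simp
  ring

lemma volume_inter_Ioc_eq_ofReal_intervalIntegral {s : Set ℝ} (hs : MeasurableSet s) {a b : ℝ}
    (hab : a ≤ b) : volume (s ∩ Ioc a b) = ENNReal.ofReal (∫ x in a..b, s.indicator 1 x) := by
  rw [intervalIntegral.integral_of_le hab, integral_indicator_one hs,
    measureReal_restrict_apply hs,
    ofReal_measureReal ((measure_mono inter_subset_right).trans_lt measure_Ioc_lt_top).ne]

def polygonAngles (L : ℕ) (t : ℝ) : Set ℝ :=
  {φ | ∀ k : Fin L, cos (φ - 2 * π * k / L) ≤ t}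

namespace polygonAngles

variable {L : ℕ} {t : ℝ}

lemma measurableSet : MeasurableSet (polygonAngles L t) := by
  simp only [polygonAngles, ofPred_forall]
  exact .iInter fun k => measurableSet_le (by fun_prop) measurable_const

lemma mem_iff_forall_int (hL : 0 < L) {φ : ℝ} :
    φ ∈ polygonAngles L t ↔ ∀ m : ℤ, cos (φ - 2 * π * m / L) ≤ t := by
  refine ⟨fun h m => ?_, fun h k => by exact_mod_cast h k⟩
  have hmod : 0 ≤ m % L := Int.emod_nonneg _ (by omega)
  have hmodL : m % L < L := Int.emod_lt_of_pos _ (by omega)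
  have := h ⟨(m % L).toNat, by omega⟩
  rwa [show (((m % L).toNat : ℕ) : ℝ) = ((m % L : ℤ) : ℝ) by
      exact_mod_cast Int.toNat_of_nonneg hmod,
    cos_sub_two_pi_mul_div_of_modEq (Int.mod_modEq m L)] at this

lemma add_period_mem_iff (hL : 0 < L) (φ : ℝ) :
    φ + 2 * π / L ∈ polygonAngles L t ↔ φ ∈ polygonAngles L t := by
  have hL' : (L : ℝ) ≠ 0 := by positivity
  simp only [mem_iff_forall_int hL]
  constructor
  · intro h m
    convert h (m + 1) using 2
    push_cast; field_simp; ring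
  · intro h m
    convert h (m - 1) using 2
    push_cast; field_simp; ring

lemma indicator_periodic (hL : 0 < L) :
    Periodic ((polygonAngles L t).indicator (1 : ℝ → ℝ)) (2 * π / L) := fun φ => by
  classical
  simp only [indicator_apply, add_period_mem_iff hL, Pi.one_apply]

lemma cos_sub_le_of_mem_sector (hL : 0 < L) {φ : ℝ} (hφ : φ ∈ Ioc (-(π / L)) (π / L))
    {k : Fin L} (hk : (k : ℕ) ≠ 0) : cos (φ - 2 * π * k / L) ≤ cos (π / L) := by
  have hLπ : L * (π / L) = π := mul_div_cancel₀ π (by positivity)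
  have hu : 0 < π / L := by positivity
  have hk1 : (1 : ℝ) ≤ k := by exact_mod_cast Nat.one_le_iff_ne_zero.mpr hk
  have hkL : (k : ℝ) + 1 ≤ L := by exact_mod_cast k.isLt
  rw [← cos_neg, neg_sub, show 2 * π * k / L = 2 * k * (π / L) by ring]
  apply cos_le_cos_of_le_of_le_two_pi_sub hu.le
  · nlinarith [hφ.2, mul_nonneg hu.le (sub_nonneg.mpr hk1)]
  · nlinarith [hφ.1, mul_nonneg hu.le (sub_nonneg.mpr hkL)]

lemma inter_sector (hL : 0 < L) (ht : cos (π / L) ≤ t) :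
    polygonAngles L t ∩ Ioc (-(π / L)) (π / L)
      = Ioc (-(π / L)) (π / L) \ Ioo (-arccos t) (arccos t) := by
  have cos_le_iff {φ : ℝ} (hφ : φ ∈ Ioc (-(π / L)) (π / L)) :
      cos φ ≤ t ↔ arccos t ≤ |φ| :=
    cos_le_iff_arccos_le_abs ((abs_le.mpr ⟨hφ.1.le, hφ.2⟩).trans (pi_div_natCast_le_pi hL))
      ((neg_one_le_cos _).trans ht)
  ext φ
  simp only [mem_inter_iff, mem_sdiff, mem_Ioo, ← abs_lt, not_lt]
  constructor
  · rintro ⟨hP, hφ⟩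
    exact ⟨hφ, (cos_le_iff hφ).mp (by simpa using hP ⟨0, hL⟩)⟩
  · rintro ⟨hφ, hβ⟩
    refine ⟨fun k => ?_, hφ⟩
    rcases eq_or_ne (k : ℕ) 0 with hk | hk
    · simpa [hk] using (cos_le_iff hφ).mpr hβ
    · exact (cos_sub_le_of_mem_sector hL hφ hk).trans ht

-- For `arccos t ≥ π / L` both sides vanish, the right one because `ENNReal.ofReal` truncates.
lemma volume_inter_sector (hL : 0 < L) (t : ℝ) :
    volume (polygonAngles L t ∩ Ioc (-(π / L)) (π / L))
      = ENNReal.ofReal (2 * π / L - 2 * arccos t) := by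
  have hu : 0 ≤ π / L := by positivity
  have huπ := pi_div_natCast_le_pi hL
  rcases le_or_gt (cos (π / L)) t with ht | ht
  · have hβ : arccos t ≤ π / L := by
      simpa only [arccos_cos hu huπ] using arccos_le_arccos ht
    rw [inter_sector hL ht, measure_sdiff ((Ioo_subset_Ioo (neg_le_neg hβ) hβ).trans
      Ioo_subset_Ioc_self) measurableSet_Ioo.nullMeasurableSet measure_Ioo_lt_top.ne,
      volume_Ioc, volume_Ioo, ← ENNReal.ofReal_sub _ (by linarith [arccos_nonneg t])]
    ring_nf
  · have hβ : π / L ≤ arccos t := by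
      simpa only [arccos_cos hu huπ] using arccos_le_arccos ht.le
    rw [ENNReal.ofReal_of_nonpos (by rw [mul_div_assoc]; linarith),
      ← measure_empty (μ := (volume : Measure ℝ))]
    refine congrArg volume (eq_empty_of_forall_notMem fun φ ⟨hP, hφ⟩ => ?_)
    have h0 : cos φ ≤ t := by simpa using hP ⟨0, hL⟩
    have : cos (π / L) ≤ cos φ := by
      rw [← cos_abs φ]
      exact cos_le_cos_of_nonneg_of_le_pi (abs_nonneg _) huπ (abs_le.mpr ⟨hφ.1.le, hφ.2⟩)
    linarith

lemma volume_inter_Ioc_neg_pi_pi (hL : 0 < L) (t : ℝ) :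
    volume (polygonAngles L t ∩ Ioc (-π) π) = ENNReal.ofReal (2 * π - 2 * L * arccos t) := by
  have hu : 0 < π / L := by positivity
  set f := (polygonAngles L t).indicator (1 : ℝ → ℝ)
  have hf : Periodic f (2 * π / L) := indicator_periodic hL
  have hint (a b : ℝ) : IntervalIntegrable f volume a b :=
    ⟨(integrableOn_const (C := (1 : ℝ)) measure_Ioc_lt_top.ne).indicator measurableSet,
      (integrableOn_const (C := (1 : ℝ)) measure_Ioc_lt_top.ne).indicator measurableSet⟩
  have hLπ : (L : ℤ) • (2 * π / L) = 2 * π := by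
    rw [zsmul_eq_mul, Int.cast_natCast]; field_simp
  have hperiods : ∫ φ in -π..π, f φ = L * ∫ φ in -(π / L)..π / L, f φ := by
    calc ∫ φ in -π..π, f φ = ∫ φ in -π..-π + (L : ℤ) • (2 * π / L), f φ := by
          rw [hLπ]; ring_nf
      _ = ∫ φ in -(π / L)..-(π / L) + (L : ℤ) • (2 * π / L), f φ :=
          (hf.zsmul L).intervalIntegral_add_eq _ _
      _ = L * ∫ φ in -(π / L)..π / L, f φ := by
          rw [hf.intervalIntegral_add_zsmul_eq L _ hint, zsmul_eq_mul, Int.cast_natCast]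
          ring_nf
  rw [volume_inter_Ioc_eq_ofReal_intervalIntegral measurableSet (by linarith [pi_pos]),
    hperiods, ENNReal.ofReal_mul (by positivity),
    ← volume_inter_Ioc_eq_ofReal_intervalIntegral measurableSet (by linarith [pi_pos]),
    volume_inter_sector hL, ← ENNReal.ofReal_mul (by positivity)]
  congr 1
  field_simp

end polygonAngles

lemma EuclideanSpace.norm_mul_cos_mul_sin (r φ : ℝ) : ‖!₂[r * cos φ, r * sin φ]‖ = |r| := by
  rw [EuclideanSpace.norm_eq]
  simp [Fin.sum_univ_two, mul_pow, ← mul_add, sqrt_sq_eq_abs]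

theorem lintegral_euclideanSpace_fin_two_eq_polar {f : EuclideanSpace ℝ (Fin 2) → ℝ≥0∞}
    (hf : Measurable f) :
    ∫⁻ x, f x
      = ∫⁻ r in Ioi 0, ENNReal.ofReal r * ∫⁻ φ in Ioc (-π) π, f !₂[r * cos φ, r * sin φ] := by
  have he : MeasurePreserving (fun p : ℝ × ℝ => !₂[p.1, p.2]) :=
    (PiLp.volume_preserving_toLp (Fin 2)).comp (volume_preserving_finTwoArrow ℝ).symm
  rw [← he.lintegral_comp hf, ← lintegral_comp_polarCoord_symm, polarCoord_target,
    Measure.volume_eq_prod, ← Measure.prod_restrict]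
  simp only [polarCoord_symm_apply, smul_eq_mul]
  rw [lintegral_prod _ (by fun_prop : Measurable fun p : ℝ × ℝ =>
    ENNReal.ofReal p.1 * f !₂[p.1 * cos p.2, p.1 * sin p.2]).aemeasurable]
  refine setLIntegral_congr_fun measurableSet_Ioi fun r _ => ?_
  rw [← setLIntegral_congr Ioo_ae_eq_Ioc,
    ← lintegral_const_mul _ (by fun_prop : Measurable fun φ => f !₂[r * cos φ, r * sin φ])]

noncomputable def radialDensity (A : Set (EuclideanSpace ℝ (Fin 2))) (r : ℝ) : ℝ≥0∞ :=
  ENNReal.ofReal r * volume ((fun φ => !₂[r * cos φ, r * sin φ]) ⁻¹' A ∩ Ioc (-π) π)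

theorem map_norm_restrict_eq_withDensity_radialDensity {A : Set (EuclideanSpace ℝ (Fin 2))}
    (hA : MeasurableSet A) :
    (volume.restrict A).map (‖·‖) = volume.withDensity (radialDensity A) := by
  classical
  ext S hS
  have hSA : MeasurableSet ((‖·‖) ⁻¹' S ∩ A) := (measurable_norm hS).inter hA
  rw [Measure.map_apply measurable_norm hS, Measure.restrict_apply (measurable_norm hS),
    withDensity_apply _ hS, ← lintegral_indicator_one hSA,
    lintegral_euclideanSpace_fin_two_eq_polar (measurable_one.indicator hSA),
    ← lintegral_indicator hS, ← setLIntegral_eq_of_support_subset (s := Ioi 0)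
      (f := S.indicator _) fun r hr => ?_]
  · refine setLIntegral_congr_fun measurableSet_Ioi fun r (hr : 0 < r) => ?_
    by_cases hrS : r ∈ S
    · have hpre : MeasurableSet ((fun φ => !₂[r * cos φ, r * sin φ]) ⁻¹' A) :=
        hA.preimage (by fun_prop)
      rw [indicator_of_mem hrS, radialDensity, ← Measure.restrict_apply hpre,
        ← lintegral_indicator_one hpre]
      congr 2 with φ
      simp [indicator_apply, EuclideanSpace.norm_mul_cos_mul_sin, abs_of_pos hr, hrS]
    · simp [EuclideanSpace.norm_mul_cos_mul_sin, abs_of_pos hr, hrS]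
  · contrapose! hr
    simp [radialDensity, ENNReal.ofReal_of_nonpos (not_lt.mp hr)]

/-- The length of the part of the circle of radius `r` inside the polygon, for `0 < r ≤ W`;
it is negative for `r > W`. -/
noncomputable def polygonArcLength (L : ℕ) (W r : ℝ) : ℝ :=
  r * (2 * π - 2 * L * arccos (W * cos (π / L) / r))

namespace polygonArcLength

variable {L : ℕ} {W ε r : ℝ}

lemma eq_of_le_apothem (hr : 0 < r) (hrc : r ≤ W * cos (π / L)) :
    polygonArcLength L W r = 2 * π * r := by
  rw [polygonArcLength, arccos_eq_zero.mpr ((one_le_div hr).mpr hrc)]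
  ring

lemma pos (hL : 3 ≤ L) (hr : 0 < r) (hrW : r < W) : 0 < polygonArcLength L W r := by
  have hβ : arccos (W * cos (π / L) / r) < π / L := by
    refine arccos_lt_of_cos_lt (by positivity) (pi_div_natCast_le_pi (by omega)) ?_
    rw [lt_div_iff₀ hr]
    nlinarith [cos_pi_div_pos hL]
  have hLu : (L : ℝ) * (π / L) = π := mul_div_cancel₀ π (by positivity)
  exact mul_pos hr (by nlinarith [mul_lt_mul_of_pos_left hβ (by positivity : (0 : ℝ) < L)])

lemma nonpos (hL : 3 ≤ L) (hW : 0 < W) (hWr : W ≤ r) : polygonArcLength L W r ≤ 0 := by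
  have hβ : π / L ≤ arccos (W * cos (π / L) / r) := by
    refine (arccos_cos (by positivity) (pi_div_natCast_le_pi (by omega))).symm.le.trans
      (arccos_le_arccos ?_)
    rw [div_le_iff₀ (hW.trans_le hWr)]
    nlinarith [cos_pi_div_pos hL]
  have hLu : (L : ℝ) * (π / L) = π := mul_div_cancel₀ π (by positivity)
  exact mul_nonpos_of_nonneg_of_nonpos (hW.le.trans hWr)
    (by nlinarith [mul_le_mul_of_nonneg_left hβ (by positivity : (0 : ℝ) ≤ L)])

lemma continuousOn {a b : ℝ} (ha : 0 < a) : ContinuousOn (polygonArcLength L W) (Icc a b) :=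
  fun _ hx => ContinuousAt.continuousWithinAt
    (by unfold polygonArcLength; fun_prop (disch := exact (ha.trans_le hx.1).ne'))

lemma intervalIntegrable {a b : ℝ} (ha : 0 < a) (hab : a ≤ b) :
    IntervalIntegrable (polygonArcLength L W) volume a b :=
  ((continuousOn ha).mono (by rw [uIcc_of_le hab])).intervalIntegrable

lemma integral_apothem_circumradius (hL : 3 ≤ L) (hW : 0 < W) :
    ∫ r in W * cos (π / L)..W, polygonArcLength L W r
      = L * W ^ 2 * sin (π / L) * cos (π / L) - π * (W * cos (π / L)) ^ 2 := by
  have hu : 0 ≤ π / L := by positivity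
  have huπ := pi_div_natCast_le_pi (by omega : 0 < L)
  set c := W * cos (π / L) with hc
  have hc0 : 0 < c := mul_pos hW (cos_pi_div_pos hL)
  have hcW : c ≤ W := mul_le_of_le_one_right hW.le (cos_le_one _)
  set F := fun r => r ^ 2 * arccos (c / r) - c * √(r ^ 2 - c ^ 2)
  have hFTC : ∫ r in c..W, polygonArcLength L W r
      = (π * W ^ 2 - L * F W) - (π * c ^ 2 - L * F c) := by
    refine intervalIntegral.integral_eq_sub_of_hasDerivAt_of_le (f := fun r => π * r ^ 2 - L * F r)
      hcW ?_ (fun x hx => ?_) (intervalIntegrable hc0 hcW)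
    · have hF : ContinuousOn F (Icc c W) := fun x hx =>
        ContinuousAt.continuousWithinAt (by fun_prop (disch := exact (hc0.trans_le hx.1).ne'))
      fun_prop
    · exact (((hasDerivAt_pow 2 x).const_mul π).sub
        ((hasDerivAt_sq_mul_arccos_div_sub hc0 hx.1).const_mul (L : ℝ))).congr_deriv
        (by simp only [polygonArcLength]; ring)
  have hFc : F c = 0 := by simp [F, div_self hc0.ne']
  have hFW : F W = W ^ 2 * (π / L) - c * (W * sin (π / L)) := by
    have hcW' : c / W = cos (π / L) := by rw [hc]; field_simp
    have hsq : W ^ 2 - c ^ 2 = (W * sin (π / L)) ^ 2 := by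
      rw [hc]; linear_combination (-W ^ 2) * sin_sq_add_cos_sq (π / L)
    simp only [F, hcW', hsq, arccos_cos hu huπ,
      sqrt_sq (mul_nonneg hW.le (sin_nonneg_of_nonneg_of_le_pi hu huπ))]
  rw [hFTC, hFc, hFW, hc]
  field_simp
  ring

lemma integral_eq (hL : 3 ≤ L) (hW : 0 < W) (hε : 0 < ε) (hεc : ε ≤ W * cos (π / L)) :
    ∫ r in ε..W, polygonArcLength L W r = 1 / 2 * L * W ^ 2 * sin (2 * π / L) - π * ε ^ 2 := by
  have hcW : W * cos (π / L) ≤ W := mul_le_of_le_one_right hW.le (cos_le_one _)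
  have hinner : ∫ r in ε..W * cos (π / L), polygonArcLength L W r
      = ∫ r in ε..W * cos (π / L), 2 * π * r :=
    intervalIntegral.integral_congr fun r hr => by
      rw [uIcc_of_le hεc] at hr
      exact eq_of_le_apothem (hε.trans_le hr.1) hr.2
  rw [← intervalIntegral.integral_add_adjacent_intervals (intervalIntegrable hε hεc)
    (intervalIntegrable (hε.trans_le hεc) hcW), hinner, intervalIntegral.integral_const_mul,
    integral_id, integral_apothem_circumradius hL hW, show 2 * π / L = 2 * (π / L) by ring,
    sin_two_mul]
  ring

lemma integral_pos (hL : 3 ≤ L) (hε : 0 < ε) (hεW : ε < W) :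
    0 < ∫ r in ε..W, polygonArcLength L W r :=
  intervalIntegral.intervalIntegral_pos_of_pos_on (intervalIntegrable hε hεW.le)
    (fun _ hr => pos hL (hε.trans hr.1) hr.2) hεW

lemma lintegral_Ioi (hL : 3 ≤ L) (hW : 0 < W) (hε : 0 < ε) (hεW : ε < W) :
    ∫⁻ r in Ioi ε, ENNReal.ofReal (polygonArcLength L W r)
      = ENNReal.ofReal (∫ r in ε..W, polygonArcLength L W r) := by
  rw [intervalIntegral.integral_of_le hεW.le, integral_Ioc_eq_integral_Ioo,
    ofReal_integral_eq_lintegral_ofReal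
      (((continuousOn hε).integrableOn_Icc).mono_set Ioo_subset_Icc_self)
      (ae_restrict_of_forall_mem measurableSet_Ioo fun r hr => (pos hL (hε.trans hr.1) hr.2).le),
    ← Ioo_union_Ici_eq_Ioi hεW, lintegral_union measurableSet_Ici
      ((Iio_disjoint_Ici le_rfl).mono_left Ioo_subset_Iio_self),
    setLIntegral_congr_fun measurableSet_Ici
      fun r hr => ENNReal.ofReal_of_nonpos (nonpos hL hW hr), lintegral_zero, add_zero]

end polygonArcLength

lemma measurableSet_regPolyMinusDisk (L : ℕ) (W ε : ℝ) :
    MeasurableSet (regPolyMinusDisk L W ε) := by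
  simp only [regPolyMinusDisk, ofPred_and, ofPred_forall]
  exact (MeasurableSet.iInter fun k => measurableSet_le (by fun_prop) measurable_const).inter
    (measurableSet_lt measurable_const measurable_norm)

lemma mul_cos_mul_sin_mem_regPolyMinusDisk_iff {L : ℕ} {W ε r : ℝ} (hr : 0 < r) (φ : ℝ) :
    !₂[r * cos φ, r * sin φ] ∈ regPolyMinusDisk L W ε
      ↔ φ ∈ polygonAngles L (W * cos (π / L) / r) ∧ ε < r := by
  simp only [regPolyMinusDisk, polygonAngles, mem_ofPred_eq,
    EuclideanSpace.norm_mul_cos_mul_sin, abs_of_pos hr, le_div_iff₀ hr, cos_sub,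
    Matrix.cons_val_zero, Matrix.cons_val_one]
  exact and_congr_left' (forall_congr' fun k => by
    rw [mul_comm _ r, mul_add, ← mul_assoc, ← mul_assoc])

lemma radialDensity_regPolyMinusDisk {L : ℕ} (hL : 0 < L) {W ε : ℝ} (hε : 0 ≤ ε) :
    radialDensity (regPolyMinusDisk L W ε)
      = (Ioi ε).indicator fun r => ENNReal.ofReal (polygonArcLength L W r) := by
  funext r
  rcases le_or_gt r 0 with hr0 | hr0
  · rw [radialDensity, ENNReal.ofReal_of_nonpos hr0, zero_mul,
      indicator_of_notMem (s := Ioi ε) (not_lt.mpr (hr0.trans hε))]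
  have hpre : (fun φ => !₂[r * cos φ, r * sin φ]) ⁻¹' regPolyMinusDisk L W ε
      = {φ | φ ∈ polygonAngles L (W * cos (π / L) / r) ∧ ε < r} :=
    ext (mul_cos_mul_sin_mem_regPolyMinusDisk_iff hr0)
  by_cases hεr : ε < r
  · simp only [radialDensity, hpre, hεr, and_true, ofPred_mem_eq,
      polygonAngles.volume_inter_Ioc_neg_pi_pi hL, indicator_of_mem (mem_Ioi.mpr hεr),
      ← ENNReal.ofReal_mul hr0.le, polygonArcLength]
  · simp [radialDensity, hpre, hεr]

lemma indicator_ofReal_polygonArcLength {L : ℕ} (hL : 3 ≤ L) {W ε : ℝ} (hW : 0 < W)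
    (hε : 0 < ε) (hεc : ε < W * cos (π / L)) {r : ℝ} (hr : r ≠ ε) :
    (Ioi ε).indicator (fun r => ENNReal.ofReal (polygonArcLength L W r)) r
      = ENNReal.ofReal (if ε ≤ r ∧ r ≤ W * cos (π / L) then 2 * π * r
          else if W * cos (π / L) ≤ r ∧ r ≤ W then
            2 * π * r - 2 * L * r * arccos (W * cos (π / L) / r)
          else 0) := by
  rcases hr.lt_or_gt with hrε | hεr
  · rw [indicator_of_notMem (s := Ioi ε) (not_lt.mpr hrε.le), if_neg fun h => hrε.not_ge h.1,
      if_neg fun h => (hrε.trans hεc).not_ge h.1, ENNReal.ofReal_zero]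
  rw [indicator_of_mem (s := Ioi ε) hεr]
  rcases le_or_gt r (W * cos (π / L)) with hrc | hcr
  · rw [if_pos ⟨hεr.le, hrc⟩, polygonArcLength.eq_of_le_apothem (hε.trans hεr) hrc]
  rw [if_neg fun h => hcr.not_ge h.2]
  rcases le_or_gt r W with hrW | hWr
  · rw [if_pos ⟨hcr.le, hrW⟩, polygonArcLength]
    ring_nf
  · rw [if_neg fun h => hWr.not_ge h.2, ENNReal.ofReal_zero,
      ENNReal.ofReal_of_nonpos (polygonArcLength.nonpos hL hW hWr.le)]

/-- Distance distribution from the center for a uniform point in a regular L-gon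
(circumradius W, apothem W_p = W cos(π/L)) with a central disk of radius ε removed:
f_R(r) = 2πr/|A'| for ε ≤ r ≤ W_p and
f_R(r) = (2πr − 2Lr arccos(W_p/r))/|A'| for W_p ≤ r ≤ W,
where |A'| = (1/2) L W² sin(2π/L) − πε². -/
theorem regular_polygon_distance_density (L : ℕ) (hL : 3 ≤ L) (W ε : ℝ)
    (hW : 0 < W) (hε : 0 < ε) (hεWp : ε < W * Real.cos (π / L)) :
    Measure.map (fun x => ‖x‖)
        ((volume (regPolyMinusDisk L W ε))⁻¹ • volume.restrict (regPolyMinusDisk L W ε))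
      = volume.withDensity (fun r => ENNReal.ofReal (
          if ε ≤ r ∧ r ≤ W * Real.cos (π / L) then
            2 * π * r / (1 / 2 * L * W ^ 2 * Real.sin (2 * π / L) - π * ε ^ 2)
          else if W * Real.cos (π / L) ≤ r ∧ r ≤ W then
            (2 * π * r - 2 * L * r * Real.arccos (W * Real.cos (π / L) / r))
              / (1 / 2 * L * W ^ 2 * Real.sin (2 * π / L) - π * ε ^ 2)
          else 0)) := by
  have hεW : ε < W := hεWp.trans_le (mul_le_of_le_one_right hW.le (cos_le_one _))
  have hmap := map_norm_restrict_eq_withDensity_radialDensity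
    (measurableSet_regPolyMinusDisk L W ε)
  rw [radialDensity_regPolyMinusDisk (by omega) hε.le] at hmap
  have harea := polygonArcLength.integral_eq hL hW hε hεWp.le
  have hpos := harea ▸ polygonArcLength.integral_pos hL hε hεW
  have hvol : volume (regPolyMinusDisk L W ε)
      = ENNReal.ofReal (1 / 2 * L * W ^ 2 * sin (2 * π / L) - π * ε ^ 2) := by
    rw [← Measure.restrict_apply_univ, ← preimage_univ (f := (‖·‖)),
      ← Measure.map_apply measurable_norm .univ, hmap, withDensity_apply _ .univ,
      Measure.restrict_univ, lintegral_indicator measurableSet_Ioi,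
      polygonArcLength.lintegral_Ioi hL hW hε hεW, harea]
  rw [Measure.map_smul, hmap, hvol, ← withDensity_smul' _ _
    (ENNReal.inv_ne_top.mpr (ENNReal.ofReal_pos.mpr hpos).ne')]
  refine withDensity_congr_ae ((Measure.ae_ne volume ε).mono fun r hr => ?_)
  rw [Pi.smul_apply, smul_eq_mul, indicator_ofReal_polygonArcLength hL hW hε hεWp hr,
    ← ENNReal.div_eq_inv_mul, ← ENNReal.ofReal_div_of_pos hpos]
  simp only [ite_div, zero_div]
end

section
/- Let H be Gamma-distributed with integer shape m_h and rate m_h, and let R be uniformly-annulus-distributed on [ε, W] (density 2r/(W²−ε²)). Then for constants γ, P_S, α > 0 and nα ≠ 2, E[F_H(γR^α/P_S)·R^{-nα}] = (2/((W²−ε²)(2−nα))) · ( W^{2−nα} Γ(m_h, 0, m_h γ W^α/P_S)/Γ(m_h) − ε^{2−nα} Γ(m_h, 0, m_h γ ε^α/P_S)/Γ(m_h) − (m_h γ/P_S)^{n−2/α} Γ(m_h − n + 2/α, m_h γ ε^α/P_S, m_h γ W^α/P_S)/Γ(m_h) ), where Γ(a, x₁, x₂) = Γ(a, x₁) − Γ(a,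 x₂) is the generalized incomplete gamma function and F_H is the CDF of H. -/
open MeasureTheory Real

/-- Upper incomplete gamma function Γ(a,x) = ∫_x^∞ t^{a-1} e^{-t} dt. -/
noncomputable def uGamma (a x : ℝ) : ℝ :=
  ∫ t in Set.Ioi x, t ^ (a - 1) * Real.exp (-t)

/-!
Substituting `u = c r^α` shows `d/dr Γ(s, c r^α) = -α c^s r^{αs-1} e^{-c r^α}`, so integrating
`(K - Γ(s, c r^α)) r^{p-1}` by parts against `r^p / p` leaves the integral of
`α c^s r^{αs+p-1} e^{-c r^α}`, which is again the derivative of an incomplete gamma function,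
namely of `-c^{-p/α} Γ(s + p/α, c r^α)`. With `K = Γ(m_h, 0)`, `s = m_h`, `c = m_h γ / P_S` and
`p = 2 - nα` this gives the closed form.
-/

open Filter Asymptotics Set

lemma continuousAt_rpow_mul_exp_neg (a : ℝ) {t : ℝ} (ht : t ≠ 0) :
    ContinuousAt (fun t : ℝ => t ^ (a - 1) * exp (-t)) t :=
  (continuousAt_rpow_const t _ (Or.inl ht)).mul (continuous_exp.comp continuous_neg).continuousAt

lemma integrableOn_rpow_mul_exp_neg_Ioi (a : ℝ) {x : ℝ} (hx : 0 < x) :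
    IntegrableOn (fun t : ℝ => t ^ (a - 1) * exp (-t)) (Ioi x) := by
  refine integrable_of_isBigO_exp_neg one_half_pos
    (fun t ht => (continuousAt_rpow_mul_exp_neg a (hx.trans_le ht).ne').continuousWithinAt) ?_
  have h := (isLittleO_rpow_exp_pos_mul_atTop (a - 1) one_half_pos).isBigO.mul
    (isBigO_refl (fun t : ℝ => exp (-t)) atTop)
  refine h.trans_eventuallyEq (Eventually.of_forall fun t => ?_)
  dsimp only
  rw [← exp_add]
  ring_nf

lemma uGamma_eq_integral_add (a : ℝ) {x y : ℝ} (hx : 0 < x) (hxy : x ≤ y) :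
    uGamma a x = (∫ t in x..y, t ^ (a - 1) * exp (-t)) + uGamma a y := by
  have hi := integrableOn_rpow_mul_exp_neg_Ioi a hx
  rw [uGamma, uGamma, ← Ioc_union_Ioi_eq_Ioi hxy, intervalIntegral.integral_of_le hxy,
    setIntegral_union (Ioc_disjoint_Ioi le_rfl) measurableSet_Ioi
      (hi.mono_set Ioc_subset_Ioi_self) (hi.mono_set (Ioi_subset_Ioi hxy))]

lemma hasDerivAt_uGamma (a : ℝ) {x : ℝ} (hx : 0 < x) :
    HasDerivAt (uGamma a) (-(x ^ (a - 1) * exp (-x))) x := by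
  have hx2 : 0 < x / 2 := by positivity
  have hlt : x / 2 < x := half_lt_self hx
  have hloc : uGamma a =ᶠ[nhds x]
      fun y => uGamma a (x / 2) - ∫ t in (x / 2)..y, t ^ (a - 1) * exp (-t) := by
    filter_upwards [eventually_gt_nhds hlt] with y hy
    rw [uGamma_eq_integral_add a hx2 hy.le]
    ring
  have hint : IntervalIntegrable (fun t : ℝ => t ^ (a - 1) * exp (-t)) volume (x / 2) x :=
    (intervalIntegrable_iff_integrableOn_Ioc_of_le hlt.le).mpr
      ((integrableOn_rpow_mul_exp_neg_Ioi a hx2).mono_set Ioc_subset_Ioi_self)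
  have hmeas : StronglyMeasurableAtFilter (fun t : ℝ => t ^ (a - 1) * exp (-t)) (nhds x) :=
    ContinuousAt.stronglyMeasurableAtFilter isOpen_Ioi
      (fun t ht => continuousAt_rpow_mul_exp_neg a (ne_of_gt ht)) x hx
  exact hloc.hasDerivAt_iff.mpr ((intervalIntegral.integral_hasDerivAt_right hint hmeas
    (continuousAt_rpow_mul_exp_neg a hx.ne')).const_sub _)

lemma hasDerivAt_uGamma_mul_rpow (s : ℝ) {c α r : ℝ} (hc : 0 < c) (hr : 0 < r) :
    HasDerivAt (fun r => uGamma s (c * r ^ α))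
      (-(α * c ^ s * r ^ (α * s - 1) * exp (-(c * r ^ α)))) r := by
  have hinner : HasDerivAt (fun r : ℝ => c * r ^ α) (c * (α * r ^ (α - 1))) r :=
    (hasDerivAt_rpow_const (Or.inl hr.ne')).const_mul c
  refine ((hasDerivAt_uGamma s (by positivity : 0 < c * r ^ α)).comp r hinner).congr_deriv ?_
  rw [mul_rpow hc.le (rpow_nonneg hr.le α), ← rpow_mul hr.le,
    show c ^ s = c ^ (s - 1) * c by rw [← rpow_add_one hc.ne', sub_add_cancel],
    show r ^ (α * s - 1) = r ^ (α * (s - 1)) * r ^ (α - 1) by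
      rw [← rpow_add hr]; ring_nf]
  ring

lemma hasDerivAt_sub_uGamma_mul_rpow_primitive (K s : ℝ) {c α p r : ℝ} (hc : 0 < c)
    (hα : α ≠ 0) (hp : p ≠ 0) (hr : 0 < r) :
    HasDerivAt (fun r => ((K - uGamma s (c * r ^ α)) * r ^ p
        + c ^ (-p / α) * uGamma (s + p / α) (c * r ^ α)) / p)
      ((K - uGamma s (c * r ^ α)) * r ^ (p - 1)) r := by
  have hcancel : c ^ (-p / α) * (c ^ (s + p / α) * r ^ (α * (s + p / α) - 1))
      = c ^ s * (r ^ (α * s - 1) * r ^ p) := by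
    rw [← mul_assoc, ← rpow_add hc, ← rpow_add hr]
    congr 2 <;> field_simp <;> ring
  refine ((((hasDerivAt_const r K).sub (hasDerivAt_uGamma_mul_rpow s hc hr)).mul
    (hasDerivAt_rpow_const (Or.inl hr.ne'))).add
      ((hasDerivAt_uGamma_mul_rpow (s + p / α) hc hr).const_mul (c ^ (-p / α)))).div_const p
    |>.congr_deriv ?_
  rw [Pi.sub_apply, div_eq_iff hp]
  linear_combination -α * exp (-(c * r ^ α)) * hcancel

lemma integral_sub_uGamma_mul_rpow (K s : ℝ) {c α p ε W : ℝ} (hc : 0 < c) (hα : α ≠ 0)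
    (hp : p ≠ 0) (hε : 0 < ε) (hW : 0 < W) :
    ∫ r in ε..W, (K - uGamma s (c * r ^ α)) * r ^ (p - 1)
      = ((K - uGamma s (c * W ^ α)) * W ^ p + c ^ (-p / α) * uGamma (s + p / α) (c * W ^ α)) / p
        - ((K - uGamma s (c * ε ^ α)) * ε ^ p
          + c ^ (-p / α) * uGamma (s + p / α) (c * ε ^ α)) / p := by
  have hpos : ∀ r ∈ uIcc ε W, 0 < r := fun r hr => (lt_min hε hW).trans_le hr.1
  refine intervalIntegral.integral_eq_sub_of_hasDerivAt
    (fun r hr => hasDerivAt_sub_uGamma_mul_rpow_primitive K s hc hα hp (hpos r hr))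
    (ContinuousOn.intervalIntegrable fun r hr => ?_)
  exact ((continuousAt_const.sub (hasDerivAt_uGamma_mul_rpow s hc (hpos r hr)).continuousAt).mul
    (continuousAt_rpow_const r _ (Or.inl (hpos r hr).ne'))).continuousWithinAt

theorem threshold_moment_disk_general (mh n : ℕ) (hm : 1 ≤ mh)
    (ε W γ PS α : ℝ)
    (hε : 0 < ε) (hW : ε < W) (hγ : 0 < γ) (hPS : 0 < PS) (hα : 0 < α)
    (hne : (n:ℝ) * α ≠ 2) :
    ∫ r in ε..W,
        ((uGamma mh 0 - uGamma mh ((mh:ℝ) * (γ * r ^ α / PS))) / Real.Gamma mh)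
          * r ^ (-((n:ℝ) * α)) * (2 * r / (W ^ 2 - ε ^ 2))
      = (2 / ((W ^ 2 - ε ^ 2) * (2 - (n:ℝ) * α)))
        * ( W ^ (2 - (n:ℝ) * α)
              * (uGamma mh 0 - uGamma mh ((mh:ℝ) * γ * W ^ α / PS)) / Real.Gamma mh
          - ε ^ (2 - (n:ℝ) * α)
              * (uGamma mh 0 - uGamma mh ((mh:ℝ) * γ * ε ^ α / PS)) / Real.Gamma mh
          - ((mh:ℝ) * γ / PS) ^ ((n:ℝ) - 2 / α)
              * (uGamma ((mh:ℝ) - n + 2 / α) ((mh:ℝ) * γ * ε ^ α / PS)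
                  - uGamma ((mh:ℝ) - n + 2 / α) ((mh:ℝ) * γ * W ^ α / PS))
              / Real.Gamma mh ) := by
  have hc : 0 < (mh : ℝ) * γ / PS := by
    have : (0 : ℝ) < mh := by exact_mod_cast hm
    positivity
  have hp : 2 - (n : ℝ) * α ≠ 0 := sub_ne_zero.mpr hne.symm
  have hintegrand : EqOn
      (fun r => ((uGamma mh 0 - uGamma mh ((mh:ℝ) * (γ * r ^ α / PS))) / Real.Gamma mh)
        * r ^ (-((n:ℝ) * α)) * (2 * r / (W ^ 2 - ε ^ 2)))
      (fun r => 2 / (W ^ 2 - ε ^ 2) / Real.Gamma mh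
        * ((uGamma mh 0 - uGamma mh ((mh : ℝ) * γ / PS * r ^ α)) * r ^ (2 - (n : ℝ) * α - 1)))
      (uIcc ε W) := by
    intro r hr
    have hr0 : 0 < r := hε.trans_le (uIcc_of_le hW.le ▸ hr).1
    dsimp only
    rw [show (mh : ℝ) * (γ * r ^ α / PS) = mh * γ / PS * r ^ α by ring,
      show 2 - (n : ℝ) * α - 1 = -(n * α) + 1 by ring, rpow_add_one hr0.ne']
    ring
  rw [mul_div_right_comm _ (W ^ α), mul_div_right_comm _ (ε ^ α),
    intervalIntegral.integral_congr hintegrand, intervalIntegral.integral_const_mul,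
    integral_sub_uGamma_mul_rpow _ _ hc hα.ne' hp hε (hε.trans hW),
    show -(2 - (n : ℝ) * α) / α = n - 2 / α by field_simp; ring,
    show (mh : ℝ) + (2 - (n : ℝ) * α) / α = mh - n + 2 / α by field_simp; ring]
  simp only [div_eq_mul_inv, mul_inv]
  ring

/-- Disk (L = ∞) special case of eq. (25): for H Gamma(m_h, m_h) with CDF
F_H(x) = γ(m_h, m_h x)/Γ(m_h) and R uniformly-annulus distributed on [ε, W],
E[F_H(γR^α/P_S) R^{-nα}] equals the stated generalized-incomplete-gamma expression,
where Γ(a,x₁,x₂) = Γ(a,x₁) − Γ(a,x₂). -/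
theorem threshold_moment_disk (mh n : ℕ) (hm : 1 ≤ mh) (hn : 1 ≤ n)
    (ε W γ PS α : ℝ)
    (hε : 0 < ε) (hW : ε < W) (hγ : 0 < γ) (hPS : 0 < PS) (hα : 0 < α)
    (hne : (n:ℝ) * α ≠ 2) :
    ∫ r in ε..W,
        ((uGamma mh 0 - uGamma mh ((mh:ℝ) * (γ * r ^ α / PS))) / Real.Gamma mh)
          * r ^ (-((n:ℝ) * α)) * (2 * r / (W ^ 2 - ε ^ 2))
      = (2 / ((W ^ 2 - ε ^ 2) * (2 - (n:ℝ) * α)))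
        * ( W ^ (2 - (n:ℝ) * α)
              * (uGamma mh 0 - uGamma mh ((mh:ℝ) * γ * W ^ α / PS)) / Real.Gamma mh
          - ε ^ (2 - (n:ℝ) * α)
              * (uGamma mh 0 - uGamma mh ((mh:ℝ) * γ * ε ^ α / PS)) / Real.Gamma mh
          - ((mh:ℝ) * γ / PS) ^ ((n:ℝ) - 2 / α)
              * (uGamma ((mh:ℝ) - n + 2 / α) ((mh:ℝ) * γ * ε ^ α / PS)
                  - uGamma ((mh:ℝ) - n + 2 / α) ((mh:ℝ) * γ * W ^ α / PS))
              / Real.Gamma mh ) :=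
  threshold_moment_disk_general mh n hm ε W γ PS α hε hW hγ hPS hα hne
end
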